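/- With the notation of the AQ-construction, the Walsh spectrum of the modified restriction f*_{αᵢ}(y) = f*(αᵢ, y) satisfies f̂*_{αᵢ}(βⱼ) = (−1)^{γ_{ij}} · 2^{n−1} for j = 1,2,3,4 and vanishes at all other points, while f*_α = f_α for α ∉ {α₁,α₂,α₃,α₄}. -/

import Mathlib

/-! On the section `x₁ = αᵢ` the modified function is the majority of the three affine functions
`lⱼ(y) = ⟨βⱼ, y⟩ + γᵢⱼ`, `j < 3`. The truth-table identity
`2·(-1)^maj(a,b,c) = (-1)^a + (-1)^b + (-1)^c - (-1)^(a+b+c)` turns twice its Walsh transform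
into a signed sum of Walsh transforms of affine functions, and `Σ βⱼ = 0`, `Σⱼ γᵢⱼ = 1` make
`l₀ + l₁ + l₂` the complement of `l₃`. The Walsh transform of `⟨β, y⟩ + c` is `(-1)^c·2ⁿ` at `β`
and `0` elsewhere. -/

open Finset

def ip {n : ℕ} (a b : Fin n → ZMod 2) : ZMod 2 := ∑ i, a i * b i

def wht {n : ℕ} (f : (Fin n → ZMod 2) → ZMod 2) (l : Fin n → ZMod 2) : ℤ :=
  ∑ x : Fin n → ZMod 2, (-1 : ℤ) ^ (f x + ip l x).val


def whtP {m k : ℕ} (f : (Fin m → ZMod 2) × (Fin k → ZMod 2) → ZMod 2)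
    (l : (Fin m → ZMod 2) × (Fin k → ZMod 2)) : ℤ :=
  ∑ x : (Fin m → ZMod 2) × (Fin k → ZMod 2),
    (-1 : ℤ) ^ (f x + ip l.1 x.1 + ip l.2 x.2).val


def fstar {n : ℕ} (φ : (Fin n → ZMod 2) → (Fin n → ZMod 2))
    (ψ : (Fin n → ZMod 2) → ZMod 2) (α : Fin 4 → (Fin n → ZMod 2))
    (γ : Fin 4 → Fin 4 → ZMod 2)
    (p : (Fin n → ZMod 2) × (Fin n → ZMod 2)) : ZMod 2 :=
  ip (φ p.1) p.2 + ψ p.1 +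
    ∑ i : Fin 4, (if p.1 = α i then
      (ip (φ (α i)) p.2 + ψ (α i) +
        ((ip (φ (α 0)) p.2 + γ i 0) * (ip (φ (α 1)) p.2 + γ i 1) +
         (ip (φ (α 0)) p.2 + γ i 0) * (ip (φ (α 2)) p.2 + γ i 2) +
         (ip (φ (α 1)) p.2 + γ i 1) * (ip (φ (α 2)) p.2 + γ i 2)))
      else 0)


lemma neg_one_pow_val_add {R : Type*} [Ring R] (a b : ZMod 2) :
    (-1 : R) ^ (a + b).val = (-1) ^ a.val * (-1) ^ b.val := by
  rw [ZMod.val_add, ← neg_one_pow_eq_pow_mod_two, pow_add]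

lemma neg_one_pow_val_sum {R : Type*} [CommRing R] {ι : Type*}
    (s : Finset ι) (f : ι → ZMod 2) :
    (-1 : R) ^ (∑ i ∈ s, f i).val = ∏ i ∈ s, (-1) ^ (f i).val := by
  classical
  induction s using Finset.induction_on with
  | empty => simp
  | insert i s hi ih => rw [sum_insert hi, prod_insert hi, neg_one_pow_val_add, ih]

lemma ip_add_left {n : ℕ} (a b y : Fin n → ZMod 2) : ip (a + b) y = ip a y + ip b y := by
  simp [ip, add_mul, sum_add_distrib]

lemma sum_neg_one_pow_val_mul (c : ZMod 2) :
    ∑ t : ZMod 2, (-1 : ℤ) ^ (c * t).val = if c = 0 then 2 else 0 := by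
  fin_cases c <;> decide

lemma sum_neg_one_pow_ip {n : ℕ} (b : Fin n → ZMod 2) :
    ∑ y : Fin n → ZMod 2, (-1 : ℤ) ^ (ip b y).val = if b = 0 then 2 ^ n else 0 := by
  calc ∑ y : Fin n → ZMod 2, (-1 : ℤ) ^ (ip b y).val
      = ∑ y : Fin n → ZMod 2, ∏ i, (-1 : ℤ) ^ (b i * y i).val := by
        simp only [ip, neg_one_pow_val_sum]
    _ = ∏ i, ∑ t : ZMod 2, (-1 : ℤ) ^ (b i * t).val := by rw [Fintype.prod_sum]
    _ = if b = 0 then 2 ^ n else 0 := by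
        simp only [sum_neg_one_pow_val_mul, Fintype.prod_ite_zero, prod_const, card_univ,
          Fintype.card_fin, funext_iff, Pi.zero_apply]

lemma wht_ip_add_const {n : ℕ} (b μ : Fin n → ZMod 2) (c : ZMod 2) :
    wht (fun y => ip b y + c) μ = if μ = b then (-1) ^ c.val * 2 ^ n else 0 := by
  have hterm : ∀ y, ip b y + c + ip μ y = c + ip (b + μ) y := fun y => by
    rw [ip_add_left]; ring
  have hzero : b + μ = 0 ↔ μ = b := by
    simp only [funext_iff, Pi.add_apply, Pi.zero_apply, CharTwo.add_eq_zero]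
    exact forall_congr' fun _ => eq_comm
  simp only [wht, hterm, neg_one_pow_val_add, ← mul_sum, sum_neg_one_pow_ip, hzero, mul_ite,
    mul_zero]

def maj (a b c : ZMod 2) : ZMod 2 := a * b + a * c + b * c

lemma two_mul_neg_one_pow_maj (a b c : ZMod 2) :
    2 * (-1 : ℤ) ^ (maj a b c).val
      = (-1) ^ a.val + (-1) ^ b.val + (-1) ^ c.val - (-1) ^ (a + b + c).val := by
  revert a b c; decide

lemma two_mul_wht_maj {n : ℕ} (l₁ l₂ l₃ : (Fin n → ZMod 2) → ZMod 2) (μ : Fin n → ZMod 2) :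
    2 * wht (fun y => maj (l₁ y) (l₂ y) (l₃ y)) μ
      = wht l₁ μ + wht l₂ μ + wht l₃ μ - wht (fun y => l₁ y + l₂ y + l₃ y) μ := by
  simp only [wht, mul_sum, ← sum_add_distrib, ← sum_sub_distrib]
  refine sum_congr rfl fun y _ => ?_
  rw [neg_one_pow_val_add (maj _ _ _), ← mul_assoc, two_mul_neg_one_pow_maj]
  simp only [neg_one_pow_val_add]
  ring

lemma two_mul_wht_maj_affine {n : ℕ} (β : Fin 4 → Fin n → ZMod 2) (hβ : ∑ j, β j = 0)
    (g : Fin 4 → ZMod 2) (hg : ∑ j, g j = 1) (μ : Fin n → ZMod 2) :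
    2 * wht (fun y => maj (ip (β 0) y + g 0) (ip (β 1) y + g 1) (ip (β 2) y + g 2)) μ
      = ∑ j, if μ = β j then (-1) ^ (g j).val * 2 ^ n else 0 := by
  have hsum : (fun y => ip (β 0) y + g 0 + (ip (β 1) y + g 1) + (ip (β 2) y + g 2))
      = fun y => ip (β 3) y + (1 + g 3) := by
    rw [Fin.sum_univ_four] at hβ hg
    funext y
    have hip : ip (β 0) y + ip (β 1) y + ip (β 2) y + ip (β 3) y = 0 := by
      rw [← ip_add_left, ← ip_add_left, ← ip_add_left, hβ]
      simp [ip]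
    linear_combination hip + hg - (ip (β 3) y + g 3) * CharTwo.two_eq_zero (R := ZMod 2)
  rw [two_mul_wht_maj, hsum]
  simp only [wht_ip_add_const, Fin.sum_univ_four, neg_one_pow_val_add (1 : ZMod 2), ZMod.val_one]
  split_ifs <;> ring

lemma fstar_restrict_eq_maj {n : ℕ} (φ : (Fin n → ZMod 2) → (Fin n → ZMod 2))
    (ψ : (Fin n → ZMod 2) → ZMod 2) (α : Fin 4 → (Fin n → ZMod 2)) (hα : Function.Injective α)
    (γ : Fin 4 → Fin 4 → ZMod 2) (i : Fin 4) :
    (fun y => fstar φ ψ α γ (α i, y)) = fun y =>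
      maj (ip (φ (α 0)) y + γ i 0) (ip (φ (α 1)) y + γ i 1) (ip (φ (α 2)) y + γ i 2) := by
  funext y
  dsimp only [fstar]
  rw [sum_eq_single_of_mem i (mem_univ i) fun k _ hk => if_neg fun h => hk (hα h).symm,
    if_pos rfl, CharTwo.add_cancel_left, maj]

lemma fstar_restrict_of_ne {n : ℕ} (φ : (Fin n → ZMod 2) → (Fin n → ZMod 2))
    (ψ : (Fin n → ZMod 2) → ZMod 2) (α : Fin 4 → (Fin n → ZMod 2)) (γ : Fin 4 → Fin 4 → ZMod 2)
    (a : Fin n → ZMod 2) (ha : ∀ i, a ≠ α i) :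
    (fun y => fstar φ ψ α γ (a, y)) = fun y => ip (φ a) y + ψ a := by
  funext y
  simp only [fstar, if_neg (ha _), sum_const_zero, add_zero]

theorem aq4_restriction_spectrum_general (n : ℕ) (hn : 2 ≤ n)
    (φ : (Fin n → ZMod 2) → (Fin n → ZMod 2)) (hφ : Function.Bijective φ)
    (ψ : (Fin n → ZMod 2) → ZMod 2)
    (α : Fin 4 → (Fin n → ZMod 2)) (hα : Function.Injective α)
    (hβsum : ∑ i, φ (α i) = 0)
    (γ : Fin 4 → Fin 4 → ZMod 2)
    (hrow : ∀ i, ∑ j, γ i j = 1) :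
    (∀ i j : Fin 4,
      wht (fun y => fstar φ ψ α γ (α i, y)) (φ (α j))
        = (-1 : ℤ) ^ (γ i j).val * 2 ^ (n - 1)) ∧
    (∀ i : Fin 4, ∀ μ : Fin n → ZMod 2, (∀ j : Fin 4, μ ≠ φ (α j)) →
      wht (fun y => fstar φ ψ α γ (α i, y)) μ = 0) ∧
    (∀ a : Fin n → ZMod 2, (∀ i : Fin 4, a ≠ α i) →
      (fun y => fstar φ ψ α γ (a, y)) = fun y => ip (φ a) y + ψ a) := by
  have hspec : ∀ i μ, 2 * wht (fun y => fstar φ ψ α γ (α i, y)) μ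
      = ∑ j, if μ = φ (α j) then (-1) ^ (γ i j).val * 2 ^ n else 0 := fun i μ => by
    rw [fstar_restrict_eq_maj φ ψ α hα γ i]
    exact two_mul_wht_maj_affine _ hβsum (γ i) (hrow i) μ
  have h2n : (2 : ℤ) ^ n = 2 * 2 ^ (n - 1) := by rw [← pow_succ']; congr 1; omega
  refine ⟨fun i j => ?_, fun i μ hμ => ?_, fstar_restrict_of_ne φ ψ α γ⟩
  · have h := hspec i (φ (α j))
    simp only [hφ.injective.eq_iff, hα.eq_iff, sum_ite_eq, if_pos (mem_univ j), h2n] at h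
    exact mul_left_cancel₀ two_ne_zero (h.trans (by ring))
  · have h := hspec i μ
    rw [sum_eq_zero fun j _ => if_neg (hμ j)] at h
    omega

theorem aq4_restriction_spectrum (n : ℕ) (hn : 2 ≤ n)
    (φ : (Fin n → ZMod 2) → (Fin n → ZMod 2)) (hφ : Function.Bijective φ)
    (ψ : (Fin n → ZMod 2) → ZMod 2)
    (α : Fin 4 → (Fin n → ZMod 2)) (hα : Function.Injective α)
    (hαsum : ∑ i, α i = 0) (hβsum : ∑ i, φ (α i) = 0)
    (γ : Fin 4 → Fin 4 → ZMod 2)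
    (hrow : ∀ i, ∑ j, γ i j = 1) (hcol : ∀ j, ∑ i, γ i j = 1) :
    (∀ i j : Fin 4,
      wht (fun y => fstar φ ψ α γ (α i, y)) (φ (α j))
        = (-1 : ℤ) ^ (γ i j).val * 2 ^ (n - 1)) ∧
    (∀ i : Fin 4, ∀ μ : Fin n → ZMod 2, (∀ j : Fin 4, μ ≠ φ (α j)) →
      wht (fun y => fstar φ ψ α γ (α i, y)) μ = 0) ∧
    (∀ a : Fin n → ZMod 2, (∀ i : Fin 4, a ≠ α i) →
      (fun y => fstar φ ψ α γ (a, y)) = fun y => ip (φ a) y + ψ a) :=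
  aq4_restriction_spectrum_general n hn φ hφ ψ α hα hβsum γ hrow
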